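/- arXiv:2210.03656 — 2 statements merged into one kernel-verified Lean document; each statement's English description precedes it below -/
import Mathlib

section
/- Let n = 3, q a positive integer, 2q-2 ≤ a ≤ 3q-3 and 0 ≤ b < q. Then in A = ℤ[x₁,x₂,x₃]/⟨x₁x₂x₃-1⟩, the truncated Schur function s^{(q)}_{(a,b)} := h_a^{(q)} h_b^{(q)} - h_{a+1}^{(q)} h_{b-1}^{(q)} equals the ordinary Schur polynomial s_{(3q-3-a+b, 3q-3-a)} in three variables. -/
open MvPolynomial

/-- The complete homogeneous symmetric polynomial `h_d` in `x₁, x₂, x₃`. -/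
noncomputable def fullH (d : ℕ) : MvPolynomial (Fin 3) ℤ :=
  ∑ s ∈ (Fintype.piFinset fun _ : Fin 3 => Finset.range (d + 1)).filter
      (fun s => ∑ i, s i = d),
    ∏ i, X i ^ s i

/-- The `q`-truncated complete symmetric polynomial `h_d^{(q)}` in `x₁, x₂, x₃`. -/
noncomputable def truncH (q d : ℕ) : MvPolynomial (Fin 3) ℤ :=
  ∑ s ∈ (Fintype.piFinset fun _ : Fin 3 => Finset.range q).filter
      (fun s => ∑ i, s i = d),
    ∏ i, X i ^ s i

/-- The Schur polynomial `s_{(a,b)} = s_{(a,b,0)}` in `x₁, x₂, x₃`, via the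
Jacobi–Trudi identity `s_{(a,b)} = h_a h_b - h_{a+1} h_{b-1}` (with `h_{-1} = 0`). -/
noncomputable def schur (a b : ℕ) : MvPolynomial (Fin 3) ℤ :=
  fullH a * fullH b - fullH (a + 1) * (if b = 0 then 0 else fullH (b - 1))

/-- The `q`-truncated Schur polynomial
`s^{(q)}_{(a,b)} = h_a^{(q)} h_b^{(q)} - h_{a+1}^{(q)} h_{b-1}^{(q)}` (with `h_{-1}^{(q)} = 0`). -/
noncomputable def truncSchur (q a b : ℕ) : MvPolynomial (Fin 3) ℤ :=
  truncH q a * truncH q b - truncH q (a + 1) * (if b = 0 then 0 else truncH q (b - 1))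

/-- The relation ideal `⟨x₁x₂x₃ - 1⟩` defining `A = ℤ[x₁,x₂,x₃]/⟨x₁x₂x₃-1⟩`. -/
noncomputable def rel3 : Ideal (MvPolynomial (Fin 3) ℤ) :=
  Ideal.span {X 0 * X 1 * X 2 - 1}

/-- The duality `f ↦ f^∨` induced by `xᵢ ↦ xᵢ⁻¹`; since `xᵢ⁻¹ = ∏_{j≠i} xⱼ` modulo
`x₁x₂x₃ = 1`, it is induced by the substitution `xᵢ ↦ ∏_{j≠i} xⱼ`. -/
noncomputable def dualize (f : MvPolynomial (Fin 3) ℤ) : MvPolynomial (Fin 3) ℤ :=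
  MvPolynomial.aeval
    (fun i : Fin 3 => ∏ j ∈ Finset.univ.erase i, (X j : MvPolynomial (Fin 3) ℤ)) f

/-!
Map `ℤ[x₁,x₂,x₃]` to the Laurent ring `ℤ[u^±, v^±]` by `x₁ ↦ u`, `x₂ ↦ v`, `x₃ ↦ (uv)⁻¹`.
Since `u ↦ x₁`, `v ↦ x₂` maps back to `A` compatibly with the quotient map, it suffices to
compare images in this domain, where the Vandermonde `Δ` can be cancelled. By the bialternant
formula `Δ h_d` is the alternant `a_{(d+2,1,0)}`. Reflecting exponents `s ↦ (q-1) - s`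
identifies `h_a^{(q)}` with the dual (`x ↦ x⁻¹`) of `h_{3q-3-a}` when `a ≥ 2q-2`, while
`h_b^{(q)} = h_b` for `b < q`. After multiplying by `Δ²` both sides become quadratic
expressions in alternants, which agree identically in the exponents.
-/

open Finset

theorem vandermonde_mul_sum_geom {R : Type*} [CommRing R] (x y z : R) (d : ℕ) :
    (x - y) * (x - z) * (y - z) *
        ∑ k ∈ range (d + 1), z ^ k * ∑ i ∈ range (d - k + 1), x ^ i * y ^ (d - k - i) =
      x ^ (d + 2) * (y - z) - y ^ (d + 2) * (x - z) + z ^ (d + 2) * (x - y) := by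
  have inner :
      (x - y) *
          ∑ k ∈ range (d + 1), z ^ k * ∑ i ∈ range (d - k + 1), x ^ i * y ^ (d - k - i) =
        x * ∑ k ∈ range (d + 1), z ^ k * x ^ (d - k) -
          y * ∑ k ∈ range (d + 1), z ^ k * y ^ (d - k) := by
    rw [mul_sum, mul_sum, mul_sum, ← sum_sub_distrib]
    refine sum_congr rfl fun k _ => ?_
    have := (Commute.all x y).mul_geom_sum₂ (d - k + 1)
    rw [Nat.add_sub_cancel] at this
    rw [mul_left_comm, this]
    ring
  have outer (t : R) :
      (t - z) * ∑ k ∈ range (d + 1), z ^ k * t ^ (d - k) = t ^ (d + 1) - z ^ (d + 1) := by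
    simpa using (Commute.all z t).mul_neg_geom_sum₂ (d + 1)
  linear_combination (x - z) * (y - z) * inner + (y - z) * x * outer x - (x - z) * y * outer y

namespace TruncatedSchur

theorem mem_filter_piFinset_range {q d : ℕ} {s : Fin 3 → ℕ} :
    s ∈ (Fintype.piFinset fun _ : Fin 3 => range q).filter (fun s => ∑ i, s i = d) ↔
      s 0 < q ∧ s 1 < q ∧ s 2 < q ∧ s 0 + s 1 + s 2 = d := by
  simp [Fin.forall_fin_succ, Fin.sum_univ_three, and_assoc]

theorem fullH_eq_sum (d : ℕ) :
    fullH d = ∑ k ∈ range (d + 1),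
      X 2 ^ k * ∑ i ∈ range (d - k + 1), X 0 ^ i * X 1 ^ (d - k - i) := by
  simp only [fullH, mul_sum]
  rw [sum_sigma']
  refine sum_nbij' (fun s => ⟨s 2, s 0⟩) (fun p => ![p.2, d - p.1 - p.2, p.1]) ?_ ?_ ?_ ?_ ?_
  · intro s hs
    rw [mem_filter_piFinset_range] at hs
    simp only [mem_sigma, mem_range]
    omega
  · rintro ⟨k, i⟩ h
    simp only [mem_sigma, mem_range] at h
    rw [mem_filter_piFinset_range]
    simp only [Matrix.cons_val]
    omega
  · intro s hs
    rw [mem_filter_piFinset_range] at hs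
    ext j; fin_cases j <;> simp; omega
  · rintro ⟨k, i⟩ -
    simp
  · intro s hs
    rw [mem_filter_piFinset_range] at hs
    rw [Fin.prod_univ_three, show d - s 2 - s 0 = s 1 by omega]
    ring

theorem truncH_eq_fullH_of_lt {q d : ℕ} (h : d < q) : truncH q d = fullH d := by
  refine sum_congr (ext fun s => ?_) fun _ _ => rfl
  rw [mem_filter_piFinset_range, mem_filter_piFinset_range]
  omega

theorem truncH_eq_zero {q d : ℕ} (h : 3 * q < d + 3) : truncH q d = 0 := by
  refine sum_eq_zero fun s hs => absurd hs ?_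
  rw [mem_filter_piFinset_range]
  omega

abbrev Laurent := AddMonoidAlgebra ℤ (ℤ × ℤ)

noncomputable def mono (p : ℤ × ℤ) : Laurent := AddMonoidAlgebra.single p 1

theorem mono_mul_mono (p r : ℤ × ℤ) : mono p * mono r = mono (p + r) := by
  simp [mono, AddMonoidAlgebra.single_mul_single]

theorem mono_zero : mono 0 = 1 := AddMonoidAlgebra.one_def.symm

theorem mono_pow (p : ℤ × ℤ) (n : ℕ) : mono p ^ n = mono (n • p) := by
  induction n with
  | zero => simp [mono_zero]
  | succ n ih => rw [pow_succ, ih, mono_mul_mono, succ_nsmul]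

noncomputable def toLaurent : MvPolynomial (Fin 3) ℤ →ₐ[ℤ] Laurent :=
  aeval ![mono (1, 0), mono (0, 1), mono (-1, -1)]

theorem toLaurent_monomial (s : Fin 3 → ℕ) :
    toLaurent (∏ i, X i ^ s i) = mono ((s 0 : ℤ) - s 2, (s 1 : ℤ) - s 2) := by
  simp only [toLaurent, Fin.prod_univ_three, map_mul, map_pow, aeval_X, Matrix.cons_val,
    mono_pow, mono_mul_mono]
  congr 1
  ext <;> simp <;> ring

noncomputable def dual : Laurent ≃ₐ[ℤ] Laurent :=
  AddMonoidAlgebra.domCongr ℤ ℤ (AddEquiv.neg (ℤ × ℤ))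

theorem dual_mono (p : ℤ × ℤ) : dual (mono p) = mono (-p) := by
  simp [dual, mono]

noncomputable def vandermonde : Laurent := toLaurent ((X 0 - X 1) * (X 0 - X 2) * (X 1 - X 2))

-- `a_{(d+2,1,0)} = det [xᵢ ^ (d+2), xᵢ, 1]` evaluated at `(u, v, (uv)⁻¹)`.
noncomputable def alternant (d : ℤ) : Laurent :=
  mono (d + 2, 0) * (mono (0, 1) - mono (-1, -1)) - mono (0, d + 2) * (mono (1, 0) - mono (-1, -1))
    + mono (-d - 2, -d - 2) * (mono (1, 0) - mono (0, 1))

theorem alternant_neg_one : alternant (-1) = 0 := by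
  simp only [alternant, mul_sub, mono_mul_mono]
  norm_num

theorem vandermonde_ne_zero : vandermonde ≠ 0 := by
  have hne {p r : ℤ × ℤ} (h : p ≠ r) : mono p - mono r ≠ 0 :=
    sub_ne_zero.mpr fun e => h (AddMonoidAlgebra.single_left_injective one_ne_zero e)
  simp only [vandermonde, toLaurent, map_mul, map_sub, aeval_X, Matrix.cons_val]
  exact mul_ne_zero (mul_ne_zero (hne (by decide)) (hne (by decide))) (hne (by decide))

theorem dual_vandermonde : dual vandermonde = -vandermonde := by
  simp only [vandermonde, toLaurent, map_mul, map_sub, aeval_X, Matrix.cons_val, dual_mono,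
    Prod.neg_mk, mul_sub, sub_mul, mono_mul_mono, Prod.mk_add_mk]
  ring_nf

theorem vandermonde_mul_toLaurent_fullH (d : ℕ) :
    vandermonde * toLaurent (fullH d) = alternant d := by
  rw [vandermonde, ← map_mul, fullH_eq_sum, vandermonde_mul_sum_geom]
  simp only [map_add, map_sub, map_mul, map_pow, toLaurent, aeval_X, Matrix.cons_val, alternant,
    mono_pow, mul_sub, mono_mul_mono]
  congr 3 <;> ext <;> simp <;> ring

theorem vandermonde_mul_toLaurent_fullH_pred (b : ℕ) :
    vandermonde * toLaurent (if b = 0 then 0 else fullH (b - 1)) = alternant (b - 1) := by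
  rcases Nat.eq_zero_or_pos b with rfl | hb
  · simp [alternant_neg_one]
  · rw [if_neg hb.ne', vandermonde_mul_toLaurent_fullH, Nat.cast_sub hb, Nat.cast_one]

theorem toLaurent_truncH {q a m : ℕ} (hm : m < q) (ham : a + m = 3 * (q - 1)) :
    toLaurent (truncH q a) = dual (toLaurent (fullH m)) := by
  simp only [truncH, fullH, map_sum]
  refine sum_nbij' (fun s i => q - 1 - s i) (fun s i => q - 1 - s i) ?_ ?_ ?_ ?_ ?_
  · intro s hs
    rw [mem_filter_piFinset_range] at hs ⊢
    omega
  · intro s hs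
    rw [mem_filter_piFinset_range] at hs ⊢
    omega
  · intro s hs
    rw [mem_filter_piFinset_range] at hs
    ext j; fin_cases j <;> simp <;> omega
  · intro s hs
    rw [mem_filter_piFinset_range] at hs
    ext j; fin_cases j <;> simp <;> omega
  · intro s hs
    rw [mem_filter_piFinset_range] at hs
    rw [toLaurent_monomial, toLaurent_monomial, dual_mono]
    congr 1
    ext <;> simp <;> omega

theorem vandermonde_mul_toLaurent_truncH {q a : ℕ} (ha₁ : 2 * q ≤ a + 2)
    (ha₂ : a + 2 ≤ 3 * q) :
    vandermonde * toLaurent (truncH q a) = -dual (alternant (3 * q - 3 - a)) := by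
  rcases ha₂.eq_or_lt with htop | hlt
  · rw [truncH_eq_zero (by omega), show (3 * q - 3 - a : ℤ) = -1 by omega, alternant_neg_one]
    simp
  · rw [toLaurent_truncH (m := 3 * q - 3 - a) (by omega) (by omega)]
    calc vandermonde * dual (toLaurent (fullH (3 * q - 3 - a)))
        = -dual (vandermonde * toLaurent (fullH (3 * q - 3 - a))) := by
          rw [map_mul, dual_vandermonde, neg_mul, neg_neg]
      _ = -dual (alternant (3 * q - 3 - a)) := by
          rw [vandermonde_mul_toLaurent_fullH]
          congr 3
          omega

theorem sq_vandermonde_mul_toLaurent_schur (c d : ℕ) :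
    vandermonde ^ 2 * toLaurent (schur c d) =
      alternant c * alternant d - alternant (c + 1) * alternant (d - 1) := by
  have h := vandermonde_mul_toLaurent_fullH
  calc vandermonde ^ 2 * toLaurent (schur c d)
      = vandermonde * toLaurent (fullH c) * (vandermonde * toLaurent (fullH d)) -
          vandermonde * toLaurent (fullH (c + 1)) *
            (vandermonde * toLaurent (if d = 0 then 0 else fullH (d - 1))) := by
        rw [schur, map_sub, map_mul, map_mul]; ring
    _ = _ := by rw [h, h, h, vandermonde_mul_toLaurent_fullH_pred]; push_cast; rfl

theorem sq_vandermonde_mul_toLaurent_truncSchur {q a b : ℕ} (ha₁ : 2 * q ≤ a + 2)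
    (ha₂ : a + 3 ≤ 3 * q) (hb : b < q) :
    vandermonde ^ 2 * toLaurent (truncSchur q a b) =
      -dual (alternant (3 * q - 3 - a)) * alternant b +
        dual (alternant (3 * q - 3 - a - 1)) * alternant (b - 1) := by
  rw [truncSchur, truncH_eq_fullH_of_lt hb, truncH_eq_fullH_of_lt (by omega : b - 1 < q)]
  calc vandermonde ^ 2 * toLaurent (truncH q a * fullH b -
        truncH q (a + 1) * if b = 0 then 0 else fullH (b - 1))
      = vandermonde * toLaurent (truncH q a) * (vandermonde * toLaurent (fullH b)) -
          vandermonde * toLaurent (truncH q (a + 1)) *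
            (vandermonde * toLaurent (if b = 0 then 0 else fullH (b - 1))) := by
        rw [map_sub, map_mul, map_mul]; ring
    _ = _ := by
        rw [vandermonde_mul_toLaurent_truncH ha₁ (by omega),
          vandermonde_mul_toLaurent_truncH (by omega) (by omega),
          vandermonde_mul_toLaurent_fullH, vandermonde_mul_toLaurent_fullH_pred]
        push_cast
        ring_nf

-- `Δ²` times `s_{(μ,μ)} h_β - s_{(μ-1,μ-1)} h_{β-1} = s_{(μ+β,μ)}`,
-- using `dual (Δ h_μ) = -Δ s_{(μ,μ)}`.
theorem dual_alternant_identity (μ β : ℤ) :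
    -dual (alternant μ) * alternant β + dual (alternant (μ - 1)) * alternant (β - 1) =
      alternant (μ + β) * alternant μ - alternant (μ + β + 1) * alternant (μ - 1) := by
  simp only [alternant, map_add, map_sub, map_mul, dual_mono, Prod.neg_mk]
  simp only [neg_add, neg_sub, mul_sub, sub_mul, mul_add, add_mul, mono_mul_mono,
    Prod.mk_add_mk]
  ring_nf

theorem prod_mk_X : ∏ i, Ideal.Quotient.mk rel3 (X i) = 1 := by
  rw [Fin.prod_univ_three, ← map_mul, ← map_mul, ← map_one (Ideal.Quotient.mk rel3),
    Ideal.Quotient.eq]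
  exact Ideal.subset_span rfl

theorem isUnit_mk_X (i : Fin 3) : IsUnit (Ideal.Quotient.mk rel3 (X i)) :=
  isUnit_of_dvd_one (prod_mk_X ▸ dvd_prod_of_mem _ (mem_univ i))

noncomputable def ofLaurent : Laurent →ₐ[ℤ] MvPolynomial (Fin 3) ℤ ⧸ rel3 :=
  AddMonoidAlgebra.lift ℤ _ (ℤ × ℤ)
    { toFun p := ↑((isUnit_mk_X 0).unit ^ p.toAdd.1 * (isUnit_mk_X 1).unit ^ p.toAdd.2)
      map_one' := by simp
      map_mul' p r := by
        simp only [toAdd_mul, Prod.fst_add, Prod.snd_add, zpow_add, Units.val_mul]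
        ring }

theorem ofLaurent_mono (p : ℤ × ℤ) :
    ofLaurent (mono p) = ↑((isUnit_mk_X 0).unit ^ p.1 * (isUnit_mk_X 1).unit ^ p.2) := by
  rw [ofLaurent, mono, AddMonoidAlgebra.lift_single, one_smul]
  rfl

theorem ofLaurent_comp_toLaurent : ofLaurent.comp toLaurent = Ideal.Quotient.mkₐ ℤ rel3 := by
  refine MvPolynomial.algHom_ext fun i => ?_
  fin_cases i
  · simp [toLaurent, ofLaurent_mono]
  · simp [toLaurent, ofLaurent_mono]
  · simp only [toLaurent, Fin.reduceFinMk, AlgHom.coe_comp, Function.comp_apply, aeval_X,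
      Matrix.cons_val, ofLaurent_mono, zpow_neg, zpow_one, Ideal.Quotient.mkₐ_eq_mk]
    rw [← mul_inv_rev, Units.inv_eq_of_mul_eq_one_right]
    simpa [Fin.prod_univ_three, mul_comm (Ideal.Quotient.mk rel3 (X 0))] using prod_mk_X

theorem mk_eq_mk_of_toLaurent_eq {f g : MvPolynomial (Fin 3) ℤ} (h : toLaurent f = toLaurent g) :
    Ideal.Quotient.mk rel3 f = Ideal.Quotient.mk rel3 g := by
  simpa [← Ideal.Quotient.mkₐ_eq_mk ℤ, ← ofLaurent_comp_toLaurent] using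
    congrArg ofLaurent h

end TruncatedSchur

theorem stmt_10_general (q a b : ℕ) (ha₁ : 2 * q - 2 ≤ a) (ha₂ : a ≤ 3 * q - 3)
    (hb : b < q) :
    Ideal.Quotient.mk rel3 (truncSchur q a b) =
      Ideal.Quotient.mk rel3 (schur (3 * q - 3 - a + b) (3 * q - 3 - a)) := by
  apply TruncatedSchur.mk_eq_mk_of_toLaurent_eq
  apply mul_left_cancel₀ (pow_ne_zero 2 TruncatedSchur.vandermonde_ne_zero)
  rw [TruncatedSchur.sq_vandermonde_mul_toLaurent_truncSchur (by omega) (by omega) hb,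
    TruncatedSchur.sq_vandermonde_mul_toLaurent_schur, TruncatedSchur.dual_alternant_identity]
  congr 3 <;> omega

/-- For `q ≥ 1`, `2q-2 ≤ a ≤ 3q-3` and `0 ≤ b < q`, the truncated Schur function
`s^{(q)}_{(a,b)}` equals the ordinary Schur polynomial `s_{(3q-3-a+b, 3q-3-a)}`
in `A = ℤ[x₁,x₂,x₃]/⟨x₁x₂x₃-1⟩`. -/
theorem stmt_10 (q a b : ℕ) (hq : 1 ≤ q) (ha₁ : 2 * q - 2 ≤ a) (ha₂ : a ≤ 3 * q - 3)
    (hb : b < q) :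
    Ideal.Quotient.mk rel3 (truncSchur q a b) =
      Ideal.Quotient.mk rel3 (schur (3 * q - 3 - a + b) (3 * q - 3 - a)) :=
  stmt_10_general q a b ha₁ ha₂ hb
end

section
/- Let p be a prime, d, e nonnegative integers with p ≤ d ≤ e ≤ 2p-2. Writing d = d' + p and e = e' + p with 0 ≤ d', e' ≤ p-2, the identity s'_{(e-1+p, d-p)} = h_{2p-2-e}^∨ · h_{d-p} - h_{2p-3-e}^∨ · h_{d-p-1} holds in ℤ[x₁,x₂,x₃]/⟨x₁x₂x₃-1⟩, where s'_{(a,b)} = h'_a h'_b - h'_{a+1} h'_{b-1} with p-truncated complete symmetric polynomials h'. -/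
open MvPolynomial

lemma mk_prod_shift (a0 a1 a2 c : ℕ) :
    Ideal.Quotient.mk rel3 ((X 0 : MvPolynomial (Fin 3) ℤ) ^ (a0 + c) * X 1 ^ (a1 + c) * X 2 ^ (a2 + c)) =
    Ideal.Quotient.mk rel3 ((X 0 : MvPolynomial (Fin 3) ℤ) ^ a0 * X 1 ^ a1 * X 2 ^ a2) := by
  have h1 : Ideal.Quotient.mk rel3 (X 0 * X 1 * X 2 : MvPolynomial (Fin 3) ℤ) = 1 := by
    have hmem : (X 0 * X 1 * X 2 - 1 : MvPolynomial (Fin 3) ℤ) ∈ rel3 :=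
      Ideal.subset_span (Set.mem_singleton _)
    have h := Ideal.Quotient.eq_zero_iff_mem.mpr hmem
    rw [map_sub, map_one, sub_eq_zero] at h
    exact h
  have h2 : ((X 0 : MvPolynomial (Fin 3) ℤ) ^ (a0 + c) * X 1 ^ (a1 + c) * X 2 ^ (a2 + c))
      = ((X 0 : MvPolynomial (Fin 3) ℤ) ^ a0 * X 1 ^ a1 * X 2 ^ a2) * (X 0 * X 1 * X 2) ^ c := by
    ring
  rw [h2, map_mul, map_pow, h1, one_pow, mul_one]

lemma dualize_mono (s : Fin 3 → ℕ) :
    dualize (∏ i, X i ^ s i : MvPolynomial (Fin 3) ℤ) =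
      X 0 ^ (s 1 + s 2) * X 1 ^ (s 0 + s 2) * X 2 ^ (s 0 + s 1) := by
  have h0 : (Finset.univ.erase (0 : Fin 3)) = {1, 2} := by decide
  have h1 : (Finset.univ.erase (1 : Fin 3)) = {0, 2} := by decide
  have h2 : (Finset.univ.erase (2 : Fin 3)) = {0, 1} := by decide
  simp only [dualize, Fin.prod_univ_three, map_mul, map_pow, aeval_X, h0, h1, h2]
  rw [show ({1,2} : Finset (Fin 3)).prod (fun j => (X j : MvPolynomial (Fin 3) ℤ)) = X 1 * X 2 by
        rw [Finset.prod_insert (by decide), Finset.prod_singleton],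
      show ({0,2} : Finset (Fin 3)).prod (fun j => (X j : MvPolynomial (Fin 3) ℤ)) = X 0 * X 2 by
        rw [Finset.prod_insert (by decide), Finset.prod_singleton],
      show ({0,1} : Finset (Fin 3)).prod (fun j => (X j : MvPolynomial (Fin 3) ℤ)) = X 0 * X 1 by
        rw [Finset.prod_insert (by decide), Finset.prod_singleton]]
  ring

lemma mem_S {q d : ℕ} {s : Fin 3 → ℕ} :
    s ∈ (Fintype.piFinset fun _ : Fin 3 => Finset.range q).filter (fun s => ∑ i, s i = d) ↔
      (s 0 < q ∧ s 1 < q ∧ s 2 < q) ∧ s 0 + s 1 + s 2 = d := by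
  simp only [Finset.mem_filter, Fintype.mem_piFinset, Finset.mem_range, Fin.sum_univ_three]
  constructor
  · rintro ⟨h1, h2⟩; exact ⟨⟨h1 0, h1 1, h1 2⟩, h2⟩
  · rintro ⟨⟨a, b, c⟩, h2⟩
    refine ⟨fun i => ?_, h2⟩
    fin_cases i <;> assumption

lemma truncH_eq_fullH {q d : ℕ} (h : d < q) : truncH q d = fullH d := by
  unfold truncH fullH
  apply Finset.sum_congr _ (fun _ _ => rfl)
  ext s
  rw [mem_S, mem_S]
  omega

lemma truncH_eq_zero {q d : ℕ} (h : 3 * q ≤ d + 2) (_hq : 1 ≤ q) : truncH q d = 0 := by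
  unfold truncH
  rw [Finset.sum_eq_zero]
  intro s hs
  rw [mem_S] at hs
  omega

lemma key {p g : ℕ} (hp : 1 ≤ p) (hg : g ≤ 3 * p - 3) :
    Ideal.Quotient.mk rel3 (dualize (truncH p g)) =
      Ideal.Quotient.mk rel3 (truncH p (3 * p - 3 - g)) := by
  unfold truncH
  have hd : ∀ S : Finset (Fin 3 → ℕ),
      dualize (∑ s ∈ S, ∏ i, X i ^ s i : MvPolynomial (Fin 3) ℤ)
        = ∑ s ∈ S, dualize (∏ i, X i ^ s i) := fun S => map_sum (aeval _) _ _
  rw [hd, map_sum, map_sum]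
  refine Finset.sum_bij' (i := fun s _ => fun i => p - 1 - s i)
    (j := fun s _ => fun i => p - 1 - s i) ?_ ?_ ?_ ?_ ?_
  · intro s hs
    simp only [mem_S] at hs ⊢
    omega
  · intro s hs
    simp only [mem_S] at hs ⊢
    omega
  · intro s hs
    obtain ⟨⟨h0, h1, h2⟩, hsum⟩ := mem_S.mp hs
    funext i
    have hle : s i < p := by fin_cases i <;> assumption
    show p - 1 - (p - 1 - s i) = s i
    omega
  · intro s hs
    obtain ⟨⟨h0, h1, h2⟩, hsum⟩ := mem_S.mp hs
    funext i
    have hle : s i < p := by fin_cases i <;> assumption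
    show p - 1 - (p - 1 - s i) = s i
    omega
  · intro s hs
    obtain ⟨⟨h0, h1, h2⟩, hsum⟩ := mem_S.mp hs
    rw [dualize_mono, Fin.prod_univ_three]
    show Ideal.Quotient.mk rel3 ((X 0 : MvPolynomial (Fin 3) ℤ) ^ (s 1 + s 2) * X 1 ^ (s 0 + s 2) * X 2 ^ (s 0 + s 1))
      = Ideal.Quotient.mk rel3 ((X 0 : MvPolynomial (Fin 3) ℤ) ^ (p - 1 - s 0) * X 1 ^ (p - 1 - s 1) * X 2 ^ (p - 1 - s 2))
    rcases le_or_gt (p - 1) g with hc | hc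
    · rw [show s 1 + s 2 = (p - 1 - s 0) + (g - (p - 1)) by omega,
          show s 0 + s 2 = (p - 1 - s 1) + (g - (p - 1)) by omega,
          show s 0 + s 1 = (p - 1 - s 2) + (g - (p - 1)) by omega]
      exact mk_prod_shift _ _ _ _
    · rw [show p - 1 - s 0 = (s 1 + s 2) + ((p - 1) - g) by omega,
          show p - 1 - s 1 = (s 0 + s 2) + ((p - 1) - g) by omega,
          show p - 1 - s 2 = (s 0 + s 1) + ((p - 1) - g) by omega]
      exact (mk_prod_shift _ _ _ _).symm

/-- Let `p` be prime and `p ≤ d ≤ e ≤ 2p-2`. Then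
`s'_{(e-1+p, d-p)} = h_{2p-2-e}^∨ · h_{d-p} - h_{2p-3-e}^∨ · h_{d-p-1}`
holds in `ℤ[x₁,x₂,x₃]/⟨x₁x₂x₃-1⟩`, where `s'_{(a,b)} = h'_a h'_b - h'_{a+1} h'_{b-1}`
with the `p`-truncated complete symmetric polynomials `h'`, and `∨` is induced by
`xᵢ ↦ xᵢ⁻¹`.  (Terms with a negative index, namely `h_{d-p-1}` when `d = p` and
`h_{2p-3-e}` when `e = 2p-2`, vanish.) -/

theorem stmt_17 (p d e : ℕ) (hp : p.Prime) (hpd : p ≤ d) (hde : d ≤ e) (he : e ≤ 2 * p - 2) :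
    Ideal.Quotient.mk rel3 (truncSchur p (e - 1 + p) (d - p)) =
      Ideal.Quotient.mk rel3
        (dualize (fullH (2 * p - 2 - e)) * fullH (d - p) -
          (if e = 2 * p - 2 then 0 else dualize (fullH (2 * p - 3 - e))) *
            (if d = p then 0 else fullH (d - p - 1))) := by
  have hp2 : 2 ≤ p := hp.two_le
  unfold truncSchur
  have hA : Ideal.Quotient.mk rel3 (truncH p (e - 1 + p)) =
      Ideal.Quotient.mk rel3 (dualize (fullH (2 * p - 2 - e))) := by
    rw [← truncH_eq_fullH (show 2 * p - 2 - e < p by omega),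
        show e - 1 + p = 3 * p - 3 - (2 * p - 2 - e) by omega]
    exact (key (by omega) (by omega)).symm
  have hB : truncH p (d - p) = fullH (d - p) := truncH_eq_fullH (by omega)
  rw [map_sub, map_sub, map_mul, map_mul, map_mul, map_mul, hB, hA]
  congr 1
  by_cases hdp : d = p
  · have hdp0 : d - p = 0 := by omega
    rw [if_pos hdp0, if_pos hdp, map_zero, mul_zero, mul_zero]
  · have hdp0 : ¬ (d - p = 0) := by omega
    rw [if_neg hdp0, if_neg hdp, truncH_eq_fullH (show d - p - 1 < p by omega)]
    congr 1
    by_cases hee : e = 2 * p - 2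
    · rw [if_pos hee, show e - 1 + p + 1 = 3 * p - 2 by omega,
          truncH_eq_zero (by omega) (by omega)]
    · rw [if_neg hee, ← truncH_eq_fullH (show 2 * p - 3 - e < p by omega),
          show e - 1 + p + 1 = 3 * p - 3 - (2 * p - 3 - e) by omega]
      exact (key (by omega) (by omega)).symm
end
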